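/- arXiv:2003.13416 — 2 statements merged into one kernel-verified Lean document; each statement's English description precedes it below -/
import Mathlib

section
/- Let β_⋄ = (1/(q·F·η))·(k1/p_b − 1/b1). If β_⋄ ∈ [0,1], then β_⋄ is the unique maximizer of the CCHP utility U on [0,1]: U(β_⋄) ≥ U(β) for every β ∈ [0,1], with equality only when β = β_⋄. -/
open Real Set

/-- CCHP utility function. -/
noncomputable def cchpU (q F η p_b k1 b1 c β : ℝ) : ℝ :=
  k1 * Real.log (1 + b1 * q * F * η * β) + c + p_b * q * F * η * (1 - β)

/-- If `β⋄ = (1/(q·F·η))·(k1/p_b − 1/b1)` lies in `[0,1]`, then it is the unique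
maximizer of the CCHP utility `U` on `[0,1]`. -/
theorem stmt_1 (q F η p_b k1 b1 c : ℝ)
    (hq : 0 < q) (hF : 0 < F) (hη : 0 < η) (hpb : 0 < p_b)
    (hk1 : 0 < k1) (hb1 : 0 < b1)
    (hmem : (1 / (q * F * η)) * (k1 / p_b - 1 / b1) ∈ Icc (0:ℝ) 1) :
    ∀ β ∈ Icc (0:ℝ) 1,
      cchpU q F η p_b k1 b1 c β
        ≤ cchpU q F η p_b k1 b1 c ((1 / (q * F * η)) * (k1 / p_b - 1 / b1)) ∧
      (cchpU q F η p_b k1 b1 c β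
        = cchpU q F η p_b k1 b1 c ((1 / (q * F * η)) * (k1 / p_b - 1 / b1)) →
        β = (1 / (q * F * η)) * (k1 / p_b - 1 / b1)) := by
  intro β hβ
  set βd := (1 / (q * F * η)) * (k1 / p_b - 1 / b1) with hβd_def
  have ha : (0:ℝ) < b1 * q * F * η := by positivity
  have hPd : 1 + b1 * q * F * η * βd = b1 * k1 / p_b := by
    rw [hβd_def]; field_simp; ring
  have hPdpos : 0 < 1 + b1 * q * F * η * βd := by rw [hPd]; positivity
  have hPpos : 0 < 1 + b1 * q * F * η * β := by nlinarith [hβ.1]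
  set t := (1 + b1 * q * F * η * β) / (1 + b1 * q * F * η * βd) with ht_def
  have htpos : 0 < t := div_pos hPpos hPdpos
  have hlog : Real.log (1 + b1 * q * F * η * β)
      = Real.log t + Real.log (1 + b1 * q * F * η * βd) := by
    rw [ht_def, Real.log_div (ne_of_gt hPpos) (ne_of_gt hPdpos)]; ring
  have haux : p_b * q * F * η * (β - βd) = k1 * (t - 1) := by
    rw [ht_def, hPd, hβd_def]
    field_simp
    ring
  have key : cchpU q F η p_b k1 b1 c βd - cchpU q F η p_b k1 b1 c β
      = k1 * (t - 1 - Real.log t) := by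
    unfold cchpU
    rw [hlog]
    nlinarith [haux]
  have hle := Real.log_le_sub_one_of_pos htpos
  constructor
  · nlinarith [key]
  · intro heq
    have ht1 : t = 1 := by
      by_contra hne
      have := Real.log_lt_sub_one_of_pos htpos hne
      nlinarith [key]
    have : 1 + b1 * q * F * η * β = 1 + b1 * q * F * η * βd := by
      have := (div_eq_one_iff_eq (ne_of_gt hPdpos)).mp ht1
      linarith [this]
    have := mul_left_cancel₀ (ne_of_gt ha) (by linarith : b1 * q * F * η * β = b1 * q * F * η * βd)
    exact this
end

section
/- The value p_b° = sqrt( p_c·Σ_{i∈I} k1^i / Σ_{i∈I}(q·F^i·η^i + 1/b1^i) ) is the unique global maximizer of the APG's anticipated profit L̃ on (0, ∞): L̃(p_b°) ≥ L̃(p) for every p > 0, with equality only when p = p_b°. -/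
open Real Set

/-!
Writing `A = Σ (q F η + 1/b1)` and `K = Σ k1`, the profit is `(p_c - p)(A - K/p)` plus a
constant. If `A p₀² = p_c K`, then `L̃(p₀) - L̃(p) = A (p - p₀)² / p`, which is nonnegative
for `p > 0` and vanishes only at `p = p₀`.
-/

/-- The APG's anticipated profit under CCHP best responses. -/
noncomputable def apgProfit {ι : Type*} (I : Finset ι) (q : ℝ) (F η k1 b1 : ι → ℝ)
    (p_s p_c R : ℝ) (p : ℝ) : ℝ :=
  (p_c - p) * ∑ i ∈ I, (q * F i * η i - (k1 i / p - 1 / b1 i)) + (p_s - p_c) * R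

theorem apgProfit_eq {ι : Type*} (I : Finset ι) (q : ℝ) (F η k1 b1 : ι → ℝ)
    (p_s p_c R p : ℝ) :
    apgProfit I q F η k1 b1 p_s p_c R p =
      (p_c - p) * (∑ i ∈ I, (q * F i * η i + 1 / b1 i) - (∑ i ∈ I, k1 i) / p)
        + (p_s - p_c) * R := by
  rw [apgProfit, Finset.sum_div, ← Finset.sum_sub_distrib]
  congr 2
  exact Finset.sum_congr rfl fun i _ => by ring

theorem sub_mul_sub_div_sub_eq_sq_div {A K c p x : ℝ} (hp : p ≠ 0) (hx : x ≠ 0)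
    (hAx : A * x ^ 2 = c * K) :
    (c - x) * (A - K / x) - (c - p) * (A - K / p) = A * (p - x) ^ 2 / p := by
  field_simp
  linear_combination (p - x) * hAx

theorem sub_mul_sub_div_uniquely_maximized_at_sqrt {A K c p : ℝ}
    (hA : 0 < A) (hcK : 0 < c * K) (hp : 0 < p) :
    (c - p) * (A - K / p) ≤ (c - √(c * K / A)) * (A - K / √(c * K / A)) ∧
      ((c - p) * (A - K / p) = (c - √(c * K / A)) * (A - K / √(c * K / A)) →
        p = √(c * K / A)) := by
  set x := √(c * K / A)
  have hx : 0 < x := Real.sqrt_pos.2 (by positivity)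
  have hAx : A * x ^ 2 = c * K := by
    rw [Real.sq_sqrt (by positivity)]
    field_simp
  have hgap := sub_mul_sub_div_sub_eq_sq_div hp.ne' hx.ne' hAx
  refine ⟨sub_nonneg.1 (hgap ▸ by positivity), fun heq => ?_⟩
  rw [heq, sub_self, eq_comm, div_eq_zero_iff, mul_eq_zero, pow_eq_zero_iff two_ne_zero,
    sub_eq_zero] at hgap
  exact (hgap.resolve_right hp.ne').resolve_left hA.ne'

/-- `p_b° = sqrt(p_c·Σ k1^i / Σ (q·F^i·η^i + 1/b1^i))` is the unique global
maximizer of the anticipated profit `L̃` on `(0, ∞)`. -/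
theorem stmt_7 {ι : Type*} (I : Finset ι) (hI : I.Nonempty)
    (q : ℝ) (hq : 0 < q) (F η k1 b1 : ι → ℝ)
    (hF : ∀ i ∈ I, 0 < F i) (hη : ∀ i ∈ I, 0 < η i)
    (hk1 : ∀ i ∈ I, 0 < k1 i) (hb1 : ∀ i ∈ I, 0 < b1 i)
    (p_c : ℝ) (hpc : 0 < p_c) (p_s R : ℝ) :
    ∀ p : ℝ, 0 < p →
      apgProfit I q F η k1 b1 p_s p_c R p
        ≤ apgProfit I q F η k1 b1 p_s p_c R
            (Real.sqrt (p_c * (∑ i ∈ I, k1 i) /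
              ∑ i ∈ I, (q * F i * η i + 1 / b1 i))) ∧
      (apgProfit I q F η k1 b1 p_s p_c R p
        = apgProfit I q F η k1 b1 p_s p_c R
            (Real.sqrt (p_c * (∑ i ∈ I, k1 i) /
              ∑ i ∈ I, (q * F i * η i + 1 / b1 i))) →
        p = Real.sqrt (p_c * (∑ i ∈ I, k1 i) /
              ∑ i ∈ I, (q * F i * η i + 1 / b1 i))) := by
  intro p hp
  have hA : 0 < ∑ i ∈ I, (q * F i * η i + 1 / b1 i) :=
    Finset.sum_pos (fun i hi => by
      have := hF i hi; have := hη i hi; have := hb1 i hi; positivity) hI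
  have hK : 0 < ∑ i ∈ I, k1 i := Finset.sum_pos hk1 hI
  obtain ⟨hle, huniq⟩ := sub_mul_sub_div_uniquely_maximized_at_sqrt hA (mul_pos hpc hK) hp
  simp only [apgProfit_eq, add_le_add_iff_right, add_left_inj]
  exact ⟨hle, huniq⟩
end
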